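/- (Theorem 2, necessity for finite generator sets.) Let X ⊆ ℝⁿ, x̂ ∈ X, and let G ⊆ X be a finite set with C(x̂, G) = C(x̂, X). Then there exists ε > 0 such that Metric.closedBall x̂ ε ∩ convexHull ℝ X ⊆ convexHull ℝ (G ∪ {x̂}); i.e., the convex hull of G together with x̂ contains the intersection of a small ball around x̂ with the convex hull of the forward-feasible region. -/

import Mathlib

/-!
After translating by `-x̂`, the hypothesis says that `G - x̂` and `X - x̂` have the same inner dual
cone, so by Farkas' lemma `X - x̂`, and with it `conv X - x̂`, lies in the closure of the cone
spanned by the finite set `G - x̂`. Near the origin a finitely generated cone agrees with the convex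
hull of its generators and `0`: by a conic Carathéodory reduction every point of the cone is
`r • z` with `z` in the convex hull of a subset `t` of the generators with `0 ∉ conv t`; the norm
is bounded below on each of the finitely many such `conv t`, which forces `r ≤ 1` for small points.
-/

/-- The inverse-feasible region `C(x̂, S)`: the set of cost vectors `c` for which `x̂`
minimizes `⟪c, ·⟫` over `S`. -/
def invFeas {n : ℕ} (xh : EuclideanSpace ℝ (Fin n)) (S : Set (EuclideanSpace ℝ (Fin n))) :
    Set (EuclideanSpace ℝ (Fin n)) :=
  {c | ∀ x ∈ S, (inner ℝ c xh : ℝ) ≤ inner ℝ c x}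

open Set Filter Topology Pointwise PointedCone

section ConicCaratheodory

variable {𝕜 E : Type*} [Field 𝕜] [LinearOrder 𝕜] [IsStrictOrderedRing 𝕜]
  [AddCommGroup E] [Module 𝕜 E]

lemma PointedCone.mem_hull_finset_iff {s : Finset E} {y : E} :
    y ∈ hull 𝕜 (s : Set E) ↔ ∃ c : E → 𝕜, (∀ v ∈ s, 0 ≤ c v) ∧ ∑ v ∈ s, c v • v = y := by
  constructor
  · intro hy
    obtain ⟨c, -, rfl⟩ := Submodule.mem_span_finset.1 hy
    exact ⟨fun v => c v, fun v _ => (c v).2, rfl⟩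
  · rintro ⟨c, hc, rfl⟩
    refine Submodule.sum_mem _ fun v hv => ?_
    rw [← Nonneg.mk_smul _ (hc v hv)]
    exact Submodule.smul_mem _ _ (subset_hull hv)

/-- One step of the conic Carathéodory reduction: subtracting a multiple of a vanishing convex
combination kills one coefficient while keeping all others nonnegative. -/
lemma PointedCone.exists_mem_hull_erase_of_zero_mem_convexHull [DecidableEq E]
    {s : Finset E} {y : E} (h0 : (0 : E) ∈ convexHull 𝕜 (s : Set E)) (hy : y ∈ hull 𝕜 (s : Set E)) :
    ∃ v ∈ s, y ∈ hull 𝕜 ((s.erase v : Finset E) : Set E) := by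
  obtain ⟨w, hw0, hw1, hw⟩ := (Finset.convexHull_eq s).subset h0
  rw [Finset.centerMass_eq_of_sum_1 _ _ hw1] at hw
  simp only [id] at hw
  obtain ⟨c, hc0, rfl⟩ := mem_hull_finset_iff.1 hy
  have hpos : (s.filter (0 < w ·)).Nonempty := by
    rw [Finset.filter_nonempty_iff]
    by_contra! h
    linarith [Finset.sum_nonpos h]
  obtain ⟨u, hu, hmin⟩ := (s.filter (0 < w ·)).exists_min_image (fun v => c v / w v) hpos
  obtain ⟨hus, hwu⟩ := Finset.mem_filter.1 hu
  set r := c u / w u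
  have hc'0 : ∀ v ∈ s, 0 ≤ c v - r * w v := by
    intro v hv
    rcases (hw0 v hv).eq_or_lt with hwv | hwv
    · simp [← hwv, hc0 v hv]
    · have := hmin v (Finset.mem_filter.2 ⟨hv, hwv⟩)
      rw [le_div_iff₀ hwv] at this
      linarith
  have hc'u : c u - r * w u = 0 := by simp [r, hwu.ne']
  refine ⟨u, hus, mem_hull_finset_iff.2 ⟨fun v => c v - r * w v,
    fun v hv => hc'0 v (Finset.mem_of_mem_erase hv), ?_⟩⟩
  rw [Finset.sum_erase _ (by simp only [hc'u, zero_smul])]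
  simp only [sub_smul, mul_smul, Finset.sum_sub_distrib, ← Finset.smul_sum, hw, smul_zero,
    sub_zero]

lemma PointedCone.exists_subset_zero_notMem_convexHull_mem_hull {s : Finset E} {y : E}
    (hy : y ∈ hull 𝕜 (s : Set E)) :
    ∃ t ⊆ s, (0 : E) ∉ convexHull 𝕜 (t : Set E) ∧ y ∈ hull 𝕜 (t : Set E) := by
  classical
  induction s using Finset.strongInduction with
  | H s ih =>
    by_cases h0 : (0 : E) ∈ convexHull 𝕜 (s : Set E)
    · obtain ⟨v, hv, hyv⟩ := exists_mem_hull_erase_of_zero_mem_convexHull h0 hy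
      obtain ⟨t, hts, ht⟩ := ih _ (Finset.erase_ssubset hv) hyv
      exact ⟨t, hts.trans (s.erase_subset v), ht⟩
    · exact ⟨s, subset_rfl, h0, hy⟩

lemma PointedCone.eq_zero_or_exists_smul_of_mem_hull {s : Finset E} {y : E}
    (hy : y ∈ hull 𝕜 (s : Set E)) :
    y = 0 ∨ ∃ r : 𝕜, 0 < r ∧ ∃ z ∈ convexHull 𝕜 (s : Set E), y = r • z := by
  obtain ⟨c, hc0, rfl⟩ := mem_hull_finset_iff.1 hy
  rcases (Finset.sum_nonneg hc0).eq_or_lt with hsum | hsum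
  · left
    refine Finset.sum_eq_zero fun v hv => ?_
    rw [(Finset.sum_eq_zero_iff_of_nonneg hc0).1 hsum.symm v hv, zero_smul]
  · refine Or.inr ⟨_, hsum, s.centerMass c id,
      s.centerMass_mem_convexHull hc0 hsum fun v hv => hv, ?_⟩
    rw [Finset.centerMass, smul_smul, mul_inv_cancel₀ hsum.ne', one_smul]
    rfl

end ConicCaratheodory

section Normed

variable {E : Type*} [NormedAddCommGroup E] [NormedSpace ℝ E]

lemma PointedCone.exists_pos_hull_inter_ball_subset_convexHull (s : Finset E) :
    ∃ ε > 0, Metric.ball 0 ε ∩ (hull ℝ (s : Set E) : Set E) ⊆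
      convexHull ℝ (insert 0 (s : Set E)) := by
  have hnorm : ∀ t ∈ s.powerset, ∀ᶠ ε in 𝓝[>] (0 : ℝ),
      (0 : E) ∉ convexHull ℝ (t : Set E) → ∀ z ∈ convexHull ℝ (t : Set E), ε ≤ ‖z‖ := by
    intro t _
    by_cases h0 : (0 : E) ∈ convexHull ℝ (t : Set E)
    · exact Eventually.of_forall fun _ h => (h h0).elim
    obtain ⟨δ, hδ, hball⟩ :=
      Metric.isOpen_iff.1 (t.finite_toSet.isClosed_convexHull (𝕜 := ℝ)).isOpen_compl 0 h0
    filter_upwards [Ioo_mem_nhdsGT hδ] with ε hε _ z hz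
    by_contra! hlt
    exact hball (mem_ball_zero_iff.2 (hlt.trans hε.2)) hz
  obtain ⟨ε, hεz, hεpos⟩ :=
    (((eventually_all_finset _).2 hnorm).and self_mem_nhdsWithin).exists
  refine ⟨ε, hεpos, ?_⟩
  rintro y ⟨hyε, hy⟩
  obtain ⟨t, hts, ht0, hyt⟩ := exists_subset_zero_notMem_convexHull_mem_hull hy
  rcases eq_zero_or_exists_smul_of_mem_hull hyt with rfl | ⟨r, hr, z, hz, rfl⟩
  · exact subset_convexHull ℝ _ (mem_insert _ _)
  have hzε : ε ≤ ‖z‖ := hεz t (Finset.mem_powerset.2 hts) ht0 z hz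
  have hr1 : r ≤ 1 := by
    rw [mem_ball_zero_iff, norm_smul, Real.norm_of_nonneg hr.le] at hyε
    nlinarith
  have hzs : z ∈ convexHull ℝ (insert 0 (s : Set E)) :=
    convexHull_mono ((Finset.coe_subset.2 hts).trans (subset_insert _ _)) hz
  exact (convex_convexHull ℝ _).smul_mem_of_zero_mem (subset_convexHull ℝ _ (mem_insert _ _))
    hzs ⟨hr.le, hr1⟩

lemma PointedCone.exists_pos_closure_hull_inter_ball_subset_convexHull (s : Finset E) :
    ∃ ε > 0, Metric.ball 0 ε ∩ closure (hull ℝ (s : Set E) : Set E) ⊆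
      convexHull ℝ (insert 0 (s : Set E)) := by
  obtain ⟨ε, hε, hsub⟩ := exists_pos_hull_inter_ball_subset_convexHull s
  refine ⟨ε, hε, fun y hy => ?_⟩
  have := closure_mono hsub (Metric.isOpen_ball.inter_closure hy)
  rwa [((s.finite_toSet.insert 0).isClosed_convexHull (𝕜 := ℝ)).closure_eq] at this

end Normed

lemma ProperCone.subset_closure_hull_of_innerDual_le {E : Type*} [NormedAddCommGroup E]
    [InnerProductSpace ℝ E] [CompleteSpace E] {s t : Set E} (h : innerDual s ≤ innerDual t) :
    t ⊆ closure (hull ℝ s : Set E) := by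
  intro x hx
  by_contra hxs
  obtain ⟨c, hc, hxc⟩ := hyperplane_separation' (Submodule.closure (hull ℝ s)) hxs
  have hcs : c ∈ innerDual s := fun v hv => hc v (subset_closure (subset_hull hv))
  exact (h hcs hx).not_gt hxc

lemma invFeas_eq_innerDual {n : ℕ} (xh : EuclideanSpace ℝ (Fin n))
    (S : Set (EuclideanSpace ℝ (Fin n))) :
    invFeas xh S = ProperCone.innerDual (-xh +ᵥ S) := by
  ext c
  simp [invFeas, Set.mem_vadd_set, real_inner_comm c, inner_add_right, inner_neg_right]

theorem ball_subset_of_finite_generatorSet_general {n : ℕ}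
    (X : Set (EuclideanSpace ℝ (Fin n))) (xh : EuclideanSpace ℝ (Fin n))
    (G : Set (EuclideanSpace ℝ (Fin n))) (hGfin : G.Finite)
    (hgen : invFeas xh G = invFeas xh X) :
    ∃ ε : ℝ, 0 < ε ∧
      Metric.closedBall xh ε ∩ convexHull ℝ X ⊆ convexHull ℝ (G ∪ {xh}) := by
  obtain ⟨V, hV⟩ := (hGfin.vadd_set (a := -xh)).exists_finset_coe
  obtain ⟨ε, hε, hball⟩ := PointedCone.exists_pos_closure_hull_inter_ball_subset_convexHull V
  have hdual : ProperCone.innerDual (-xh +ᵥ G) = ProperCone.innerDual (-xh +ᵥ X) :=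
    SetLike.coe_injective (by rwa [← invFeas_eq_innerDual, ← invFeas_eq_innerDual])
  have hcone : -xh +ᵥ convexHull ℝ X ⊆
      closure (hull ℝ (V : Set (EuclideanSpace ℝ (Fin n))) : Set (EuclideanSpace ℝ (Fin n))) := by
    rw [← convexHull_vadd]
    exact convexHull_min (ProperCone.subset_closure_hull_of_innerDual_le (hV ▸ hdual.le))
      (hull ℝ _).convex.closure
  refine ⟨ε / 2, half_pos hε, fun z ⟨hzε, hzX⟩ => ?_⟩
  have hz : -xh +ᵥ z ∈ convexHull ℝ (insert 0 (V : Set _)) := by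
    refine hball ⟨?_, hcone (vadd_mem_vadd_set hzX)⟩
    rw [mem_ball_zero_iff, vadd_eq_add, neg_add_eq_sub, ← dist_eq_norm]
    exact (Metric.mem_closedBall.1 hzε).trans_lt (half_lt_self hε)
  have hhull : xh +ᵥ insert 0 (V : Set (EuclideanSpace ℝ (Fin n))) = G ∪ {xh} := by
    rw [vadd_set_insert, hV, vadd_neg_vadd, vadd_eq_add, add_zero, union_singleton]
  rw [← hhull, convexHull_vadd]
  simpa using vadd_mem_vadd_set (a := xh) hz

/-- Theorem 2, necessity for finite generator sets: if `G ⊆ X` is a finite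
forward-feasible generator set, then the convex hull of `G ∪ {x̂}` contains a small
ball around `x̂` intersected with the convex hull of `X`. -/
theorem ball_subset_of_finite_generatorSet {n : ℕ}
    (X : Set (EuclideanSpace ℝ (Fin n))) (xh : EuclideanSpace ℝ (Fin n)) (hx : xh ∈ X)
    (G : Set (EuclideanSpace ℝ (Fin n))) (hGX : G ⊆ X) (hGfin : G.Finite)
    (hgen : invFeas xh G = invFeas xh X) :
    ∃ ε : ℝ, 0 < ε ∧
      Metric.closedBall xh ε ∩ convexHull ℝ X ⊆ convexHull ℝ (G ∪ {xh}) :=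
  ball_subset_of_finite_generatorSet_general X xh G hGfin hgen
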